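/- arXiv:2504.08268 — 2 statements merged into one kernel-verified Lean document; each statement's English description precedes it below -/
import Mathlib

section
/- Let H be a graph that has a dominating system, and let 𝒟 be a dominating system of H of minimum cardinality. Then any two distinct stars in 𝒟 have distinct centers. -/
/-- A subgraph `D` of `H` is a closed trail of `H` if it is the subgraph traced out by
a closed walk of `H` that repeats no edge. -/
def IsClosedTrailSubgraph {V : Type*} (H : SimpleGraph V) (D : H.Subgraph) : Prop :=
  ∃ (v : V) (w : H.Walk v v), w.IsTrail ∧ D = w.toSubgraph

/-- A subgraph `D` of `H` is a star with at least three edges with center `c` if every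
vertex of `D` other than `c` is a neighbor of `c`, every edge of `D` is incident with
`c`, and `D` has at least three edges. -/
def IsStarWithCenter {V : Type*} (H : SimpleGraph V) (D : H.Subgraph) (c : V) : Prop :=
  c ∈ D.verts ∧ (∀ v ∈ D.verts, v = c ∨ D.Adj c v) ∧
    (∀ e ∈ D.edgeSet, c ∈ e) ∧ 3 ≤ D.edgeSet.ncard

/-- A subgraph `D` of `H` is a star with at least three edges. -/
def IsBigStarSubgraph {V : Type*} (H : SimpleGraph V) (D : H.Subgraph) : Prop :=
  ∃ c : V, IsStarWithCenter H D c

/-- A dominating system of `H` is a finite set `𝒟` of pairwise edge-disjoint subgraphs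
of `H`, each of which is either a closed trail or a star with at least three edges,
such that every edge of `H` not belonging to any member of `𝒟` has at least one
endpoint lying on a closed trail in `𝒟`. -/
def IsDomSystem {V : Type*} (H : SimpleGraph V) (𝒟 : Set H.Subgraph) : Prop :=
  𝒟.Finite ∧
    (∀ D ∈ 𝒟, ∀ D' ∈ 𝒟, D ≠ D' → D.edgeSet ∩ D'.edgeSet = ∅) ∧
    (∀ D ∈ 𝒟, IsClosedTrailSubgraph H D ∨ IsBigStarSubgraph H D) ∧
    ∀ e ∈ H.edgeSet, (∀ D ∈ 𝒟, e ∉ D.edgeSet) →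
      ∃ D ∈ 𝒟, IsClosedTrailSubgraph H D ∧ ∃ v, v ∈ e ∧ v ∈ D.verts

/-! Two stars of a dominating system with a common center `c` can be merged into a single star
with center `c`. This keeps the system dominating, since a star is never a closed trail (its
leaves have odd degree), so every closed trail of the old system survives; but the new system
is smaller, contradicting minimality. -/

theorem Set.ncard_insert_sdiff_pair_lt {α : Type*} {s : Set α} (hs : s.Finite) {a b : α}
    (ha : a ∈ s) (hb : b ∈ s) (hab : a ≠ b) (x : α) :
    (insert x (s \ {a, b})).ncard < s.ncard := by
  have hsub : {a, b} ⊆ s := Set.insert_subset ha (Set.singleton_subset_iff.mpr hb)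
  have hpair_le : 2 ≤ s.ncard := Set.ncard_pair hab ▸ Set.ncard_le_ncard hsub hs
  calc (insert x (s \ {a, b})).ncard ≤ (s \ {a, b}).ncard + 1 := Set.ncard_insert_le _ _
    _ = s.ncard - 2 + 1 := by rw [Set.ncard_sdiff' hsub hs, Set.ncard_pair hab]
    _ < s.ncard := by omega

namespace IsStarWithCenter

variable {V : Type*} {H : SimpleGraph V} {D D' : H.Subgraph} {c : V}

theorem edgeSet_finite (hD : IsStarWithCenter H D c) : D.edgeSet.Finite :=
  Set.finite_of_ncard_pos (by have := hD.2.2.2; omega)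

theorem exists_adj (hD : IsStarWithCenter H D c) : ∃ x, D.Adj c x := by
  obtain ⟨e, he⟩ : D.edgeSet.Nonempty :=
    Set.nonempty_of_ncard_ne_zero (by have := hD.2.2.2; omega)
  obtain ⟨x, rfl⟩ := Sym2.mem_iff_exists.mp (hD.2.2.1 e he)
  exact ⟨x, he⟩

theorem eq_of_mem_edgeSet (hD : IsStarWithCenter H D c) {x : V} (hx : x ≠ c) {e : Sym2 V}
    (he : e ∈ D.edgeSet) (hxe : x ∈ e) : e = s(c, x) :=
  (Sym2.mem_and_mem_iff hx.symm).mp ⟨hD.2.2.1 e he, hxe⟩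

theorem not_isClosedTrailSubgraph (hD : IsStarWithCenter H D c) :
    ¬ IsClosedTrailSubgraph H D := by
  classical
  rintro ⟨v, w, hw, rfl⟩
  obtain ⟨x, hcx⟩ := hD.exists_adj
  have hxc : x ≠ c := hcx.ne.symm
  have hcount : w.edges.countP (fun e => x ∈ e) = w.edges.count s(c, x) := by
    rw [List.count_eq_countP]
    refine List.countP_congr fun e he => ?_
    simp only [decide_eq_true_eq, beq_iff_eq]
    exact ⟨hD.eq_of_mem_edgeSet hxc (w.mem_edges_toSubgraph.mpr he), by rintro rfl; simp⟩
  have hone : w.edges.count s(c, x) = 1 :=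
    List.count_eq_one_of_mem hw.edges_nodup (w.mem_edges_toSubgraph.mp hcx)
  have heven := (hw.even_countP_edges_iff x).mpr (absurd rfl)
  rw [hcount, hone] at heven
  exact Nat.not_even_one heven

theorem sup (hD : IsStarWithCenter H D c) (hD' : IsStarWithCenter H D' c) :
    IsStarWithCenter H (D ⊔ D') c := by
  refine ⟨Or.inl hD.1, ?_, ?_, ?_⟩
  · rintro v (hv | hv)
    · exact (hD.2.1 v hv).imp_right fun h => SimpleGraph.Subgraph.sup_adj.mpr (Or.inl h)
    · exact (hD'.2.1 v hv).imp_right fun h => SimpleGraph.Subgraph.sup_adj.mpr (Or.inr h)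
  · rw [SimpleGraph.Subgraph.edgeSet_sup]
    rintro e (he | he)
    exacts [hD.2.2.1 e he, hD'.2.2.1 e he]
  · rw [SimpleGraph.Subgraph.edgeSet_sup]
    exact hD.2.2.2.trans
      (Set.ncard_le_ncard Set.subset_union_left (hD.edgeSet_finite.union hD'.edgeSet_finite))

end IsStarWithCenter

theorem IsDomSystem.insert_sup_sdiff {V : Type*} {H : SimpleGraph V} {𝒟 : Set H.Subgraph}
    {D D' : H.Subgraph} (h𝒟 : IsDomSystem H 𝒟) (hD : D ∈ 𝒟) (hD' : D' ∈ 𝒟)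
    (hDt : ¬ IsClosedTrailSubgraph H D) (hD't : ¬ IsClosedTrailSubgraph H D')
    (hsup : IsClosedTrailSubgraph H (D ⊔ D') ∨ IsBigStarSubgraph H (D ⊔ D')) :
    IsDomSystem H (insert (D ⊔ D') (𝒟 \ {D, D'})) := by
  obtain ⟨hfin, hdisj, htype, hcover⟩ := h𝒟
  have mem_rest {F : H.Subgraph} (hF : F ∈ 𝒟) (hFD : F ≠ D) (hFD' : F ≠ D') :
      F ∈ insert (D ⊔ D') (𝒟 \ {D, D'}) :=
    Set.mem_insert_of_mem _ ⟨hF, by simp [hFD, hFD']⟩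
  have disj_sup {F : H.Subgraph} (hF : F ∈ 𝒟 \ {D, D'}) :
      (D ⊔ D').edgeSet ∩ F.edgeSet = ∅ := by
    simp only [Set.mem_sdiff, Set.mem_insert_iff, Set.mem_singleton_iff, not_or] at hF
    rw [SimpleGraph.Subgraph.edgeSet_sup, Set.union_inter_distrib_right,
      hdisj D hD F hF.1 (Ne.symm hF.2.1), hdisj D' hD' F hF.1 (Ne.symm hF.2.2), Set.union_empty]
  refine ⟨(hfin.sdiff).insert _, ?_, ?_, ?_⟩
  · rintro A (rfl | hA) B (rfl | hB) hAB
    · exact absurd rfl hAB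
    · exact disj_sup hB
    · rw [Set.inter_comm]; exact disj_sup hA
    · exact hdisj A hA.1 B hB.1 hAB
  · rintro A (rfl | hA)
    exacts [hsup, htype A hA.1]
  · intro e he hnot
    have hnot𝒟 : ∀ F ∈ 𝒟, e ∉ F.edgeSet := by
      intro F hF heF
      by_cases hFD : F = D
      · exact hnot _ (Set.mem_insert _ _) (SimpleGraph.Subgraph.edgeSet_sup ▸ Or.inl (hFD ▸ heF))
      by_cases hFD' : F = D'
      · exact hnot _ (Set.mem_insert _ _) (SimpleGraph.Subgraph.edgeSet_sup ▸ Or.inr (hFD' ▸ heF))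
      exact hnot F (mem_rest hF hFD hFD') heF
    obtain ⟨F, hF, hFt, hv⟩ := hcover e he hnot𝒟
    exact ⟨F, mem_rest hF (fun h => hDt (h ▸ hFt)) (fun h => hD't (h ▸ hFt)), hFt, hv⟩

theorem min_dom_system_stars_distinct_centers_general
    {V : Type*} (H : SimpleGraph V) (𝒟 : Set H.Subgraph)
    (hdom : IsDomSystem H 𝒟)
    (hmin : ∀ 𝒟' : Set H.Subgraph, IsDomSystem H 𝒟' → 𝒟.ncard ≤ 𝒟'.ncard) :
    ∀ D ∈ 𝒟, ∀ D' ∈ 𝒟, D ≠ D' → ∀ c c' : V,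
      IsStarWithCenter H D c → IsStarWithCenter H D' c' → c ≠ c' := by
  rintro D hD D' hD' hne c c' hc hc' rfl
  have hmerged := hdom.insert_sup_sdiff hD hD' hc.not_isClosedTrailSubgraph
    hc'.not_isClosedTrailSubgraph (Or.inr ⟨c, hc.sup hc'⟩)
  exact (hmin _ hmerged).not_gt (Set.ncard_insert_sdiff_pair_lt hdom.1 hD hD' hne _)

/-- Let `𝒟` be a dominating system of `H` of minimum cardinality.  Then any two
distinct stars in `𝒟` have distinct centers. -/
theorem min_dom_system_stars_distinct_centers
    {V : Type*} [Fintype V] (H : SimpleGraph V) (𝒟 : Set H.Subgraph)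
    (hdom : IsDomSystem H 𝒟)
    (hmin : ∀ 𝒟' : Set H.Subgraph, IsDomSystem H 𝒟' → 𝒟.ncard ≤ 𝒟'.ncard) :
    ∀ D ∈ 𝒟, ∀ D' ∈ 𝒟, D ≠ D' → ∀ c c' : V,
      IsStarWithCenter H D c → IsStarWithCenter H D' c' → c ≠ c' :=
  min_dom_system_stars_distinct_centers_general H 𝒟 hdom hmin
end

section
/- Let k be a positive integer and let G_k be the claw-free graph obtained from a complete graph H_0 on vertex set {v_1, …, v_{k+3}} and k pairwise disjoint copies H_1, …, H_k of K_{k+2} by joining every vertex of H_i to v_i for each i ∈ {1, …, k}. Then every 2-factor of G_k has at least k + 1 cycles; indeed, each of v_1, …, v_k is a cut vertex of G_k and G_k − {v_1, …, v_k} has exactly k + 1 connected components. -/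
/-!
In a 2-factor every vertex has degree 2. Apply the handshake lemma to the 2-factor restricted
to a copy `H_i`: since every edge leaving `H_i` ends at `v_i`, the odd-degree vertices there are
exactly the 2-factor neighbours of `v_i` in `H_i`, so `v_i` has 0 or 2 of them. In both cases the
cycle through a vertex of `H_i` stays inside `H_i ∪ {v_i}`, so the cycles through `H_1, …, H_k`
and through `v_{k+3}` are pairwise distinct.
-/

/-- A graph is claw-free if it contains no induced subgraph isomorphic to `K_{1,3}`. -/
def ClawFree {V : Type*} (G : SimpleGraph V) : Prop :=
  ¬ ∃ v a b c : V, a ≠ b ∧ a ≠ c ∧ b ≠ c ∧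
    G.Adj v a ∧ G.Adj v b ∧ G.Adj v c ∧ ¬ G.Adj a b ∧ ¬ G.Adj a c ∧ ¬ G.Adj b c

/-- A finset of vertices is an independent set of `G` if no two of its vertices
are adjacent. -/
def IsIndepFinset {V : Type*} (G : SimpleGraph V) (I : Finset V) : Prop :=
  ∀ a ∈ I, ∀ b ∈ I, ¬ G.Adj a b

/-- A 2-factor of `G` is a 2-regular spanning subgraph of `G`. -/
def IsTwoFactor {V : Type*} (G : SimpleGraph V) (F : G.Subgraph) : Prop :=
  F.IsSpanning ∧ ∀ v : V, (F.neighborSet v).ncard = 2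

/-- The vertex set of the graph `G_k`: the complete graph `H_0` on `k + 3` vertices
`v_1, …, v_{k+3}` (given by `Sum.inl`), together with `k` disjoint copies
`H_1, …, H_k` of `K_{k+2}` (the copy `H_i` consists of the vertices `Sum.inr (i, a)`). -/
abbrev GkVertex (k : ℕ) : Type := Fin (k + 3) ⊕ Fin k × Fin (k + 2)

/-- The base relation for `G_k`: all pairs inside `H_0` are related, two vertices of the
copies are related iff they lie in the same copy `H_i`, and `v_i ∈ H_0` is related to
every vertex of the copy `H_i`. -/
def GkRel (k : ℕ) : GkVertex k → GkVertex k → Prop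
  | Sum.inl _, Sum.inl _ => True
  | Sum.inr ⟨i, _⟩, Sum.inr ⟨j, _⟩ => i = j
  | Sum.inl i, Sum.inr ⟨j, _⟩ => (i : ℕ) = (j : ℕ)
  | Sum.inr _, Sum.inl _ => False

/-- The graph `G_k`, obtained from a complete graph `H_0` on vertices `v_1, …, v_{k+3}`
and `k` pairwise disjoint copies `H_1, …, H_k` of `K_{k+2}` by joining every vertex of
`H_i` to `v_i` for each `i ∈ {1, …, k}`. -/
def Gk (k : ℕ) : SimpleGraph (GkVertex k) := SimpleGraph.fromRel (GkRel k)

open Finset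

namespace SimpleGraph

variable {V ι : Type*} {G : SimpleGraph V}

theorem Reachable.mem_of_forall_adj_mem {s : Set V} (hs : ∀ x ∈ s, ∀ y, G.Adj x y → y ∈ s)
    {x y : V} (h : G.Reachable x y) (hx : x ∈ s) : y ∈ s := by
  obtain ⟨w⟩ := h
  induction w with
  | nil => exact hx
  | cons hadj _ ih => exact ih (hs _ hx _ hadj)

theorem reachable_of_ne_imp_adj {x y : V} (h : x ≠ y → G.Adj x y) : G.Reachable x y := by
  by_cases hxy : x = y
  · exact hxy ▸ Reachable.refl x
  · exact (h hxy).reachable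

theorem card_le_card_connectedComponent [Finite V] (f : ι → V)
    (hf : ∀ i j, G.Reachable (f i) (f j) → i = j) :
    Nat.card ι ≤ Nat.card G.ConnectedComponent :=
  Nat.card_le_card_of_injective (fun i => G.connectedComponentMk (f i))
    fun i j h => hf i j (ConnectedComponent.exact h)

theorem card_connectedComponent_eq_of_label (l : V → ι) (r : ι → V) (hlr : ∀ i, l (r i) = i)
    (hadj : ∀ x y, G.Adj x y → l x = l y) (hreach : ∀ x, G.Reachable (r (l x)) x) :
    Nat.card G.ConnectedComponent = Nat.card ι := by
  refine (Nat.card_eq_of_bijective (fun i => G.connectedComponentMk (r i)) ⟨?_, ?_⟩).symm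
  · intro i j h
    have : l (r j) = i := (ConnectedComponent.exact h).mem_of_forall_adj_mem (s := {x | l x = i})
      (fun x hx y hxy => (hadj x y hxy).symm.trans hx) (hlr i)
    rw [← this, hlr]
  · exact ConnectedComponent.ind fun x => ⟨l x, ConnectedComponent.sound (hreach x)⟩

section Parity

variable [Fintype V] [DecidableEq V] [DecidableRel G.Adj]

theorem even_card_neighborFinset_inter (heven : ∀ x, Even (G.degree x)) {s : Finset V} {v : V}
    (hv : v ∉ s) (hs : ∀ x ∈ s, ∀ y ∉ s, G.Adj x y → y = v) :
    Even #(G.neighborFinset v ∩ s) := by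
  -- The odd-degree vertices of `G[s]` are the neighbours of `v` in `s`.
  have hdeg : ∀ x : (s : Set V),
      G.degree x = (G.induce s).degree x + if G.Adj v x then 1 else 0 := by
    rintro ⟨x, hx⟩
    have hout : G.neighborFinset x \ s = if G.Adj v x then {v} else ∅ := by
      ext y
      split_ifs with hvx
      · simp only [mem_sdiff, mem_neighborFinset, mem_singleton]
        exact ⟨fun ⟨hxy, hy⟩ => hs x hx y hy hxy, by rintro rfl; exact ⟨hvx.symm, hv⟩⟩
      · simp only [mem_sdiff, mem_neighborFinset, notMem_empty, iff_false, not_and]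
        intro hxy hy
        exact hvx (hs x hx y hy hxy ▸ hxy.symm)
    have hin : (G.induce s).degree ⟨x, hx⟩ = #(G.neighborFinset x ∩ s) := by
      have := congrArg card (map_neighborFinset_induce (G := G) (s := (s : Set V)) ⟨x, hx⟩)
      rw [card_map, toFinset_coe, card_neighborFinset_eq_degree] at this
      convert this
    rw [hin, ← card_neighborFinset_eq_degree, ← card_inter_add_card_sdiff _ s, hout]
    split_ifs <;> rfl
  have hodd : ∀ x : (s : Set V), Odd ((G.induce s).degree x) ↔ G.Adj v x := by
    intro x
    have := heven x
    rw [hdeg x] at this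
    split_ifs at this with h <;> simp_all [Nat.even_add_one]
  have := (G.induce s).even_card_odd_degree_vertices
  simp only [hodd] at this
  convert this using 1
  rw [← card_map (.subtype _)]
  congr 1
  ext y
  simp [and_comm]

theorem Reachable.mem_or_eq_of_degree_le_two (heven : ∀ x, Even (G.degree x)) {s : Finset V}
    {v : V} (hv2 : G.degree v ≤ 2) (hv : v ∉ s) (hs : ∀ x ∈ s, ∀ y ∉ s, G.Adj x y → y = v)
    {x y : V} (h : G.Reachable x y) (hx : x ∈ s) : y ∈ s ∨ y = v := by
  -- `v` has 0 or 2 neighbours in `s`, so `s` or `insert v s` is closed under adjacency.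
  have hle : #(G.neighborFinset v ∩ s) ≤ G.degree v :=
    (card_le_card inter_subset_left).trans_eq (card_neighborFinset_eq_degree G v)
  obtain ⟨m, hm⟩ := even_card_neighborFinset_inter heven hv hs
  obtain h0 | h2 : #(G.neighborFinset v ∩ s) = 0 ∨ G.degree v ≤ #(G.neighborFinset v ∩ s) := by
    omega
  · refine Or.inl (h.mem_of_forall_adj_mem (s := s) (fun x hx y hxy => ?_) hx)
    by_contra hy
    obtain rfl := hs x hx y hy hxy
    rw [card_eq_zero, eq_empty_iff_forall_notMem] at h0
    exact h0 x (mem_inter.2 ⟨(mem_neighborFinset _ _ _).2 hxy.symm, hx⟩)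
  · have hsub : G.neighborFinset v ⊆ s := by
      rw [← card_neighborFinset_eq_degree] at h2
      exact (eq_of_subset_of_card_le inter_subset_left h2).symm ▸ inter_subset_right
    have hins : ∀ x ∈ insert v s, ∀ y, G.Adj x y → y ∈ insert v s := by
      intro x hx y hxy
      rcases mem_insert.1 hx with rfl | hx
      · exact mem_insert_of_mem (hsub ((mem_neighborFinset _ _ _).2 hxy))
      · by_cases hy : y ∈ s
        · exact mem_insert_of_mem hy
        · exact hs x hx y hy hxy ▸ mem_insert_self _ _
    exact (mem_insert.1 (h.mem_of_forall_adj_mem hins (mem_insert_of_mem hx))).symm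

end Parity

end SimpleGraph

namespace Gk

open SimpleGraph

variable {k : ℕ}

@[simp]
theorem adj_inl_inl {u w : Fin (k + 3)} : (Gk k).Adj (.inl u) (.inl w) ↔ u ≠ w := by
  simp [Gk, GkRel]

@[simp]
theorem adj_inl_inr {u : Fin (k + 3)} {j : Fin k} {b : Fin (k + 2)} :
    (Gk k).Adj (.inl u) (.inr (j, b)) ↔ (u : ℕ) = j := by
  simp [Gk, GkRel]

@[simp]
theorem adj_inr_inl {u : Fin (k + 3)} {j : Fin k} {b : Fin (k + 2)} :
    (Gk k).Adj (.inr (j, b)) (.inl u) ↔ (u : ℕ) = j := by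
  simp [Gk, GkRel]

@[simp]
theorem adj_inr_inr {i j : Fin k} {a b : Fin (k + 2)} :
    (Gk k).Adj (.inr (i, a)) (.inr (j, b)) ↔ i = j ∧ a ≠ b := by
  simp only [Gk, GkRel, fromRel_adj, ne_eq, Sum.inr.injEq, Prod.mk.injEq]
  grind

/-- `v i` is the paper's `v_{i+1}`, the vertex of `H_0` joined to the copy `H_{i+1}`. -/
def v (i : Fin k) : GkVertex k := .inl (Fin.castLE (Nat.le_add_right k 3) i)

/-- The vertex `v_{k+3}` of `H_0`, joined to no copy. -/
def vLast : GkVertex k := .inl (Fin.last (k + 2))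

def copy (i : Fin k) : Finset (GkVertex k) := univ.image fun a => .inr (i, a)

@[simp]
theorem inl_notMem_copy {u : Fin (k + 3)} {i : Fin k} : .inl u ∉ copy i := by
  simp [copy]

@[simp]
theorem inr_mem_copy {i j : Fin k} {a : Fin (k + 2)} : .inr (j, a) ∈ copy i ↔ j = i := by
  simp [copy, eq_comm]

@[simp]
theorem vLast_notMem_copy (i : Fin k) : vLast ∉ copy i := inl_notMem_copy

@[simp]
theorem vLast_ne_v (i : Fin k) : vLast ≠ v i := by
  simp only [vLast, v, ne_eq, Sum.inl.injEq, Fin.ext_iff, Fin.val_last, Fin.val_castLE]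
  omega

theorem eq_v_of_adj_of_mem_copy {i : Fin k} {x y : GkVertex k} (hx : x ∈ copy i)
    (h : (Gk k).Adj x y) (hy : y ∉ copy i) : y = v i := by
  obtain ⟨a, -, rfl⟩ := mem_image.1 hx
  rcases y with u | ⟨j, b⟩
  · simpa [v, Fin.ext_iff] using h
  · simp_all

theorem reachable_mem_copy_or_eq_v {F : (Gk k).Subgraph}
    (hF : ∀ x, (F.neighborSet x).ncard = 2) {i : Fin k} {x y : GkVertex k} (hx : x ∈ copy i)
    (h : F.spanningCoe.Reachable x y) : y ∈ copy i ∨ y = v i := by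
  classical
  have hdeg : ∀ x, F.spanningCoe.degree x = 2 := fun x => by
    rw [← card_neighborSet_eq_degree, ← Nat.card_eq_fintype_card, Nat.card_coe_set_eq]
    exact hF x
  exact h.mem_or_eq_of_degree_le_two (fun x => (hdeg x).symm ▸ even_two) (hdeg _).le (by simp [v])
    (fun x hx y hy hxy => eq_v_of_adj_of_mem_copy hx (F.adj_sub hxy) hy) hx

def block : GkVertex k → Option (Fin k)
  | .inl _ => none
  | .inr (i, _) => some i

def blockRep : Option (Fin k) → GkVertex k
  | none => vLast
  | some i => .inr (i, 0)

theorem le_card_connectedComponent_of_isTwoFactor {F : (Gk k).Subgraph}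
    (hF : IsTwoFactor (Gk k) F) : k + 1 ≤ Nat.card F.coe.ConnectedComponent := by
  have hsep : ∀ i o, F.spanningCoe.Reachable (.inr (i, 0)) (blockRep o) → o = some i := by
    rintro i (_ | j) h
    · exact absurd (reachable_mem_copy_or_eq_v hF.2 (inr_mem_copy.2 rfl) h) (by simp [blockRep])
    · simpa [blockRep, v] using reachable_mem_copy_or_eq_v hF.2 (inr_mem_copy.2 rfl) h
  have hinj : ∀ o o', F.spanningCoe.Reachable (blockRep o) (blockRep o') → o = o' := by
    rintro (_ | i) (_ | j) h
    · rfl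
    · exact hsep j none h.symm
    · exact (hsep i none h).symm
    · exact (hsep i (some j) h).symm
  rw [← Nat.card_congr (F.spanningCoeEquivCoeOfSpanning hF.1).connectedComponentEquiv]
  calc k + 1 = Nat.card (Option (Fin k)) := by simp
    _ ≤ _ := card_le_card_connectedComponent blockRep hinj

theorem reachable_vLast (x : GkVertex k) : (Gk k).Reachable vLast x := by
  rcases x with u | ⟨j, a⟩
  · exact reachable_of_ne_imp_adj fun h => adj_inl_inl.2 fun hu => h (congrArg _ hu)
  · have hv : (Gk k).Reachable vLast (v j) :=
      reachable_of_ne_imp_adj fun h => by simpa [vLast, v, Fin.ext_iff] using h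
    exact hv.trans (adj_inl_inr.2 (by simp)).reachable

theorem not_connected_induce_ne_v (i : Fin k) :
    ¬ ((Gk k).induce {x | x ≠ v i}).Connected := by
  intro hconn
  have hclosed : ∀ x ∈ {x : {x | x ≠ v i} | x.1 ∈ copy i}, ∀ y,
      ((Gk k).induce {x | x ≠ v i}).Adj x y → y.1 ∈ copy i :=
    fun x hx y hxy => by_contra fun hy => y.2 (eq_v_of_adj_of_mem_copy hx hxy hy)
  have := (hconn.preconnected ⟨.inr (i, 0), by simp [v]⟩ ⟨vLast, vLast_ne_v i⟩).mem_of_forall_adj_mem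
    hclosed (by simp)
  simp [vLast] at this

theorem card_connectedComponent_induce_forall_ne_v :
    Nat.card ((Gk k).induce {x | ∀ i, x ≠ v i}).ConnectedComponent = k + 1 := by
  set S : Set (GkVertex k) := {x | ∀ i, x ≠ v i}
  have hrep : ∀ o, blockRep o ∈ S := by
    rintro (_ | j) i
    · exact vLast_ne_v i
    · simp [blockRep, v]
  have hadj : ∀ x y : S, ((Gk k).induce S).Adj x y → block x.1 = block y.1 := by
    rintro ⟨u | ⟨i, a⟩, hx⟩ ⟨w | ⟨j, b⟩, hy⟩ h <;>
      simp only [comap_adj, Function.Embedding.subtype_apply, adj_inl_inl, adj_inl_inr, adj_inr_inl,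
        adj_inr_inr, block, reduceCtorEq, Option.some.injEq] at h ⊢
    · exact hx j (by simp [v, Fin.ext_iff, h])
    · exact hy i (by simp [v, Fin.ext_iff, h])
    · exact h.1
  have hreach : ∀ x : S, ((Gk k).induce S).Reachable ⟨blockRep (block x.1), hrep _⟩ x := by
    rintro ⟨u | ⟨j, a⟩, hx⟩
    · exact reachable_of_ne_imp_adj fun h => by simpa [blockRep, block, vLast] using h
    · exact reachable_of_ne_imp_adj fun h => by simpa [blockRep, block] using h
  rw [card_connectedComponent_eq_of_label (fun x => block x.1) (fun o => ⟨blockRep o, hrep o⟩)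
    (by rintro (_ | _) <;> rfl) hadj hreach]
  simp

end Gk

/-- Every 2-factor of `G_k` has at least `k + 1` cycles; indeed, `G_k` is connected,
each of `v_1, …, v_k` is a cut vertex of `G_k`, and `G_k - {v_1, …, v_k}` has exactly
`k + 1` connected components. -/
theorem Gk_two_factor_many_cycles (k : ℕ) :
    -- every 2-factor of `G_k` has at least `k + 1` cycles
    (∀ F : (Gk k).Subgraph, IsTwoFactor (Gk k) F →
      k + 1 ≤ Nat.card F.coe.ConnectedComponent) ∧
    -- `G_k` is connected
    (Gk k).Connected ∧
    -- each `v_i`, `i ∈ {1, …, k}`, is a cut vertex of `G_k`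
    (∀ i : Fin k,
      ¬ ((Gk k).induce
        {x : GkVertex k | x ≠ Sum.inl (Fin.castLE (by omega) i)}).Connected) ∧
    -- `G_k - {v_1, …, v_k}` has exactly `k + 1` connected components
    Nat.card ((Gk k).induce
      {x : GkVertex k | ∀ i : Fin k,
        x ≠ Sum.inl (Fin.castLE (by omega) i)}).ConnectedComponent = k + 1 := by
  exact ⟨fun _ hF => Gk.le_card_connectedComponent_of_isTwoFactor hF,
    (SimpleGraph.connected_iff_exists_forall_reachable _).2 ⟨_, Gk.reachable_vLast⟩,
    Gk.not_connected_induce_ne_v, Gk.card_connectedComponent_induce_forall_ne_v⟩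
end
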